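/- Let m ∈ ℝ and define f̃(u,z) = (|z|/√(2πu³))·exp(−(z−mu)²/(2u)) for u > 0, f̃(u,z)=0 for u ≤ 0. For every ε > 0 and M ≥ 1 there exists a constant c̃ > 0 such that for all u > 0 and z ∈ ℝ with z ≠ 0: f̃(u,z) ≤ c̃·u^{−1+ε}·|z|^{−2ε}·exp(mz/M). -/

import Mathlib

open Real

/-- First passage density of Brownian motion with drift `m`, extended by `0` for `u ≤ 0`. -/
noncomputable def ftilde (m : ℝ) (u z : ℝ) : ℝ :=
  if 0 < u then |z| / Real.sqrt (2 * π * u ^ 3) * Real.exp (-(z - m * u) ^ 2 / (2 * u)) else 0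

/-!
With `θ = 1 - 1/M` one has `-(z - m u)² = -(1 - θ²) z² + 2 (1 - θ) m z u - (θ z - m u)²`, so the
Gaussian factor of `f̃` splits into `exp (m z / M)` and `exp (-b z² / u)` with `b = (1 - θ²)/2 > 0`.
In the variable `t = z² / u` the rest is `t ^ a e^{-b t} u^{-1+ε} |z|^{-2ε} / √(2π)` with
`a = 1/2 + ε`, and `t ^ a e^{-b t} ≤ (a / b) ^ a e^{-a}` because `x ≤ e^{x-1}`.
-/

theorem rpow_mul_exp_neg_mul_le {a b t : ℝ} (ha : 0 < a) (hb : 0 < b) (ht : 0 ≤ t) :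
    t ^ a * exp (-(b * t)) ≤ (a / b) ^ a * exp (-a) := by
  have hbt : 0 ≤ b * t / a := by positivity
  have key : (b * t / a) ^ a ≤ exp (b * t - a) := by
    calc (b * t / a) ^ a ≤ exp (b * t / a - 1) ^ a := by
          gcongr; linarith [add_one_le_exp (b * t / a - 1)]
      _ = exp (b * t - a) := by rw [← exp_mul]; congr 1; field_simp
  have ht_eq : t ^ a = (a / b) ^ a * (b * t / a) ^ a := by
    rw [← mul_rpow (by positivity) hbt]; congr 1; field_simp
  calc t ^ a * exp (-(b * t)) ≤ (a / b) ^ a * exp (b * t - a) * exp (-(b * t)) := by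
        rw [ht_eq]; gcongr
    _ = (a / b) ^ a * exp (-a) := by
      rw [mul_assoc, ← exp_add]; congr 2; ring

theorem neg_sq_sub_mul_div_le (m θ u z : ℝ) (hu : 0 < u) :
    -(z - m * u) ^ 2 / (2 * u) ≤ -((1 - θ ^ 2) / 2 * (z ^ 2 / u)) + (1 - θ) * m * z := by
  rw [div_le_iff₀ (by positivity)]
  have hexpand : (-((1 - θ ^ 2) / 2 * (z ^ 2 / u)) + (1 - θ) * m * z) * (2 * u)
      = -((1 - θ ^ 2) * z ^ 2) + 2 * (1 - θ) * m * z * u := by field_simp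
  rw [hexpand]
  nlinarith [sq_nonneg (θ * z - m * u)]

theorem ftilde_le_mul_exp (m θ : ℝ) {u : ℝ} (z : ℝ) (hu : 0 < u) :
    ftilde m u z ≤ |z| / sqrt (2 * π * u ^ 3) * exp (-((1 - θ ^ 2) / 2 * (z ^ 2 / u))) *
      exp ((1 - θ) * m * z) := by
  rw [ftilde, if_pos hu, mul_assoc (|z| / _), ← exp_add]
  gcongr
  exact neg_sq_sub_mul_div_le m θ u z hu

theorem abs_div_sqrt_eq_rpow_mul {u z : ℝ} (a : ℝ) (hu : 0 < u) (hz : z ≠ 0) :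
    |z| / sqrt (2 * π * u ^ 3) =
      (z ^ 2 / u) ^ a / sqrt (2 * π) * u ^ (a - 3 / 2) * |z| ^ (1 - 2 * a) := by
  have hz' : 0 < |z| := abs_pos.mpr hz
  rw [sqrt_mul (by positivity), ← sq_abs z, sqrt_eq_rpow (u ^ 3), div_rpow (by positivity) hu.le,
    ← rpow_natCast, ← rpow_natCast, ← rpow_mul hu.le, ← rpow_mul hz'.le]
  rw [rpow_sub hu, rpow_sub hz', rpow_one]
  push_cast
  rw [show (3 : ℝ) * (1 / 2) = 3 / 2 by norm_num]
  field_simp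

theorem abs_div_sqrt_mul_exp_le {a b u z : ℝ} (ha : 0 < a) (hb : 0 < b) (hu : 0 < u)
    (hz : z ≠ 0) :
    |z| / sqrt (2 * π * u ^ 3) * exp (-(b * (z ^ 2 / u))) ≤
      (a / b) ^ a * exp (-a) / sqrt (2 * π) * u ^ (a - 3 / 2) * |z| ^ (1 - 2 * a) := by
  rw [abs_div_sqrt_eq_rpow_mul a hu hz]
  calc (z ^ 2 / u) ^ a / sqrt (2 * π) * u ^ (a - 3 / 2) * |z| ^ (1 - 2 * a) *
        exp (-(b * (z ^ 2 / u)))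
      = (z ^ 2 / u) ^ a * exp (-(b * (z ^ 2 / u))) / sqrt (2 * π) * u ^ (a - 3 / 2) *
          |z| ^ (1 - 2 * a) := by ring
    _ ≤ _ := by gcongr ?_ / _ * _ * _; exact rpow_mul_exp_neg_mul_le ha hb (by positivity)

/-- For every ε > 0 and M ≥ 1 there is c̃ > 0 such that
`f̃(u,z) ≤ c̃ u^{-1+ε} |z|^{-2ε} exp(mz/M)` for all u > 0 and z ≠ 0. -/
theorem stmt_2 (m : ℝ) (ε M : ℝ) (hε : 0 < ε) (hM : 1 ≤ M) :
    ∃ c : ℝ, 0 < c ∧ ∀ u z : ℝ, 0 < u → z ≠ 0 →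
      ftilde m u z ≤ c * u ^ (-1 + ε) * |z| ^ (-(2 * ε)) * Real.exp (m * z / M) := by
  have hM0 : 0 < M := by linarith
  set θ := 1 - 1 / M
  have hθ : θ ^ 2 < 1 := by
    have : 1 / M ≤ 1 := (div_le_one hM0).mpr hM
    have : 0 < 1 / M := by positivity
    nlinarith
  set a := 1 / 2 + ε
  set b := (1 - θ ^ 2) / 2
  have hb : 0 < b := by simp only [b]; linarith
  refine ⟨(a / b) ^ a * exp (-a) / sqrt (2 * π), by positivity, fun u z hu hz => ?_⟩
  calc ftilde m u z ≤ _ := ftilde_le_mul_exp m θ z hu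
    _ ≤ (a / b) ^ a * exp (-a) / sqrt (2 * π) * u ^ (a - 3 / 2) * |z| ^ (1 - 2 * a) *
          exp ((1 - θ) * m * z) := by
      gcongr ?_ * _; exact abs_div_sqrt_mul_exp_le (by positivity) hb hu hz
    _ = _ := by
      rw [show a - 3 / 2 = -1 + ε by ring, show 1 - 2 * a = -(2 * ε) by ring,
        show (1 - θ) * m * z = m * z / M by ring]
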